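/- Let d ≥ 2 be a natural number and let 2 ≤ R₁ < R₂ be real numbers. Among all nonnegative continuous functions g on [R₁, R₂] with ∫_{R₁}^{R₂} g(t) dt > 0, the quantity (∫_{R₁}^{R₂} g(t)^d (t log t)^{d-1} dt) / (∫_{R₁}^{R₂} g(t) dt)^d is minimized by g(t) = 1/(t log t), and its minimal value is (log(log R₂ / log R₁))^{1-d}. -/

import Mathlib

/-!
Hölder's inequality with exponents `d` and `d / (d - 1)`, applied to `g w^((d-1)/d)` and
`w^(-(d-1)/d)`, gives `(∫ g)^d ≤ (∫ g^d w^(d-1)) (∫ 1/w)^(d-1)` for every positive weight `w`.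
For `w t = t log t` the last integral is `log (log R₂ / log R₁)`, as `log ∘ log` is a primitive
of `1 / (t log t)`. For `g = 1 / w` the integrand `g^d w^(d-1)` is `g` itself, so the bound is
attained.
-/

open MeasureTheory Set

lemma memLp_restrict_Ioc_of_continuousOn {a b : ℝ} {F : ℝ → ℝ}
    (hF : ContinuousOn F (Icc a b)) (p : ENNReal) :
    MemLp F p (volume.restrict (Ioc a b)) := by
  obtain ⟨C, hC⟩ := isCompact_Icc.exists_bound_of_continuousOn hF
  exact MemLp.of_bound ((hF.mono Ioc_subset_Icc_self).aestronglyMeasurable measurableSet_Ioc) C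
    ((ae_restrict_mem measurableSet_Ioc).mono fun x hx => hC x (Ioc_subset_Icc_self hx))

lemma intervalIntegral.integral_mul_le_Lp_mul_Lq_of_continuousOn {a b p q : ℝ} (hab : a ≤ b)
    (hpq : p.HolderConjugate q) {f g : ℝ → ℝ}
    (hf : ContinuousOn f (Icc a b)) (hg : ContinuousOn g (Icc a b))
    (hf₀ : ∀ t ∈ Icc a b, 0 ≤ f t) (hg₀ : ∀ t ∈ Icc a b, 0 ≤ g t) :
    ∫ t in a..b, f t * g t ≤
      (∫ t in a..b, f t ^ p) ^ (1 / p) * (∫ t in a..b, g t ^ q) ^ (1 / q) := by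
  simp only [intervalIntegral.integral_of_le hab]
  have nonneg_ae {F : ℝ → ℝ} (hF : ∀ t ∈ Icc a b, 0 ≤ F t) :
      0 ≤ᵐ[volume.restrict (Ioc a b)] F :=
    (ae_restrict_mem measurableSet_Ioc).mono fun t ht => hF t (Ioc_subset_Icc_self ht)
  exact integral_mul_le_Lp_mul_Lq_of_nonneg hpq (nonneg_ae hf₀) (nonneg_ae hg₀)
    (memLp_restrict_Ioc_of_continuousOn hf _) (memLp_restrict_Ioc_of_continuousOn hg _)

lemma intervalIntegral.pow_integral_le_integral_mul_integral_inv_pow {a b : ℝ} (hab : a ≤ b)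
    {d : ℕ} (hd : 1 < d) {g w : ℝ → ℝ}
    (hg : ContinuousOn g (Icc a b)) (hw : ContinuousOn w (Icc a b))
    (hg₀ : ∀ t ∈ Icc a b, 0 ≤ g t) (hw₀ : ∀ t ∈ Icc a b, 0 < w t) :
    (∫ t in a..b, g t) ^ d ≤
      (∫ t in a..b, g t ^ d * w t ^ (d - 1)) * (∫ t in a..b, 1 / w t) ^ (d - 1) := by
  have hd' : (1 : ℝ) < d := by exact_mod_cast hd
  have hd₁ : (d : ℝ) - 1 ≠ 0 := (sub_pos.2 hd').ne'
  set s : ℝ := ((d : ℝ) - 1) / d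
  have hws : ContinuousOn (fun t => w t ^ s) (Icc a b) :=
    hw.rpow_const fun t ht => Or.inl (hw₀ t ht).ne'
  have hwns : ContinuousOn (fun t => w t ^ (-s)) (Icc a b) :=
    hw.rpow_const fun t ht => Or.inl (hw₀ t ht).ne'
  have holder := integral_mul_le_Lp_mul_Lq_of_continuousOn (p := d) (q := d / (d - 1))
    (f := fun t => g t * w t ^ s) hab (Real.HolderConjugate.conjExponent hd') (hg.mul hws) hwns
    (fun t ht => mul_nonneg (hg₀ t ht) (Real.rpow_nonneg (hw₀ t ht).le _))
    (fun t ht => Real.rpow_nonneg (hw₀ t ht).le _)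
  have hdq : (d : ℝ) / ((d : ℝ) - 1) * s = 1 := by simp only [s]; field_simp
  have hds : (d : ℝ) * s = ((d - 1 : ℕ) : ℝ) := by
    rw [Nat.cast_sub hd.le, Nat.cast_one]; simp only [s]; field_simp
  have e₁ : ∫ t in a..b, g t * w t ^ s * w t ^ (-s) = ∫ t in a..b, g t :=
    intervalIntegral.integral_congr fun t ht => by
      rw [uIcc_of_le hab] at ht
      rw [mul_assoc, ← Real.rpow_add (hw₀ t ht), add_neg_cancel, Real.rpow_zero, mul_one]
  have e₂ : ∫ t in a..b, (g t * w t ^ s) ^ (d : ℝ) = ∫ t in a..b, g t ^ d * w t ^ (d - 1) :=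
    intervalIntegral.integral_congr fun t ht => by
      rw [uIcc_of_le hab] at ht
      rw [Real.mul_rpow (hg₀ t ht) (Real.rpow_nonneg (hw₀ t ht).le _), ← Real.rpow_mul
        (hw₀ t ht).le, mul_comm s, hds, Real.rpow_natCast, Real.rpow_natCast]
  have e₃ : ∫ t in a..b, (w t ^ (-s)) ^ ((d : ℝ) / ((d : ℝ) - 1)) = ∫ t in a..b, 1 / w t :=
    intervalIntegral.integral_congr fun t ht => by
      rw [uIcc_of_le hab] at ht
      rw [← Real.rpow_mul (hw₀ t ht).le, neg_mul, mul_comm, hdq, Real.rpow_neg_one, one_div]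
  rw [e₁, e₂, e₃] at holder
  have hA : 0 ≤ ∫ t in a..b, g t ^ d * w t ^ (d - 1) := intervalIntegral.integral_nonneg hab
    fun t ht => mul_nonneg (pow_nonneg (hg₀ t ht) d) (pow_nonneg (hw₀ t ht).le _)
  have hL : 0 ≤ ∫ t in a..b, 1 / w t :=
    intervalIntegral.integral_nonneg hab fun t ht => (one_div_pos.2 (hw₀ t ht)).le
  have hpow {x : ℝ} (hx : 0 ≤ x) (r : ℝ) : (x ^ (1 / r)) ^ d = x ^ ((d : ℝ) / r) := by
    rw [← Real.rpow_natCast, ← Real.rpow_mul hx, one_div_mul_eq_div]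
  calc (∫ t in a..b, g t) ^ d
      ≤ ((∫ t in a..b, g t ^ d * w t ^ (d - 1)) ^ (1 / (d : ℝ)) *
          (∫ t in a..b, 1 / w t) ^ (1 / ((d : ℝ) / (d - 1)))) ^ d :=
        pow_le_pow_left₀ (intervalIntegral.integral_nonneg hab hg₀) holder d
    _ = _ := by
        rw [mul_pow, hpow hA, hpow hL, div_self (by positivity), Real.rpow_one,
          div_div_cancel₀ (by positivity), ← Nat.cast_pred (by omega), Real.rpow_natCast]

lemma integral_one_div_mul_log {a b : ℝ} (ha : 1 < a) (hb : 1 < b) :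
    ∫ t in a..b, 1 / (t * Real.log t) = Real.log (Real.log b / Real.log a) := by
  have hx {x : ℝ} (hx : x ∈ uIcc a b) : 1 < x := lt_of_lt_of_le (lt_min ha hb) hx.1
  have hderiv : ∀ x ∈ uIcc a b,
      HasDerivAt (fun x => Real.log (Real.log x)) (1 / (x * Real.log x)) x := fun x hxab => by
    have h₀ : 0 < x := one_pos.trans (hx hxab)
    have := (Real.hasDerivAt_log (Real.log_pos (hx hxab)).ne').comp x
      (Real.hasDerivAt_log h₀.ne')
    exact this.congr_deriv (by field_simp)
  have hcont : ContinuousOn (fun t => 1 / (t * Real.log t)) (uIcc a b) :=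
    continuousOn_const.div (continuousOn_id.mul (Real.continuousOn_log.mono fun x hxab =>
      (one_pos.trans (hx hxab)).ne')) fun x hxab =>
        (mul_pos (one_pos.trans (hx hxab)) (Real.log_pos (hx hxab))).ne'
  rw [intervalIntegral.integral_eq_sub_of_hasDerivAt hderiv hcont.intervalIntegrable,
    Real.log_div (Real.log_pos hb).ne' (Real.log_pos ha).ne']

open Real in
theorem stmt1 (d : ℕ) (hd : 2 ≤ d) (R₁ R₂ : ℝ) (h1 : 2 ≤ R₁) (h2 : R₁ < R₂) :
    (∀ g : ℝ → ℝ, ContinuousOn g (Set.Icc R₁ R₂) →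
      (∀ t ∈ Set.Icc R₁ R₂, 0 ≤ g t) →
      0 < (∫ t in R₁..R₂, g t) →
      (Real.log (Real.log R₂ / Real.log R₁)) ^ (1 - (d : ℤ)) ≤
        (∫ t in R₁..R₂, g t ^ d * (t * Real.log t) ^ (d - 1)) /
          (∫ t in R₁..R₂, g t) ^ d) ∧
    (∫ t in R₁..R₂, (1 / (t * Real.log t)) ^ d * (t * Real.log t) ^ (d - 1)) /
        (∫ t in R₁..R₂, 1 / (t * Real.log t)) ^ d =
      (Real.log (Real.log R₂ / Real.log R₁)) ^ (1 - (d : ℤ)) := by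
  have hR₁ : 1 < R₁ := by linarith
  have hlog : ∫ t in R₁..R₂, 1 / (t * log t) = log (log R₂ / log R₁) :=
    integral_one_div_mul_log hR₁ (hR₁.trans h2)
  set L := log (log R₂ / log R₁)
  have hL : 0 < L := log_pos ((one_lt_div (log_pos hR₁)).2 (log_lt_log (by linarith) h2))
  have hw : ∀ t ∈ Icc R₁ R₂, 0 < t * log t := fun t ht =>
    mul_pos (by linarith [ht.1]) (log_pos (by linarith [ht.1]))
  have hwc : ContinuousOn (fun t => t * log t) (Icc R₁ R₂) :=
    continuousOn_id.mul (continuousOn_log.mono fun t ht => (by linarith [ht.1] : (0 : ℝ) < t).ne')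
  have hzpow : L ^ (1 - (d : ℤ)) = L / L ^ d := by
    rw [zpow_sub₀ hL.ne', zpow_one, zpow_natCast]
  constructor
  · intro g hg hg₀ hI
    have key := intervalIntegral.pow_integral_le_integral_mul_integral_inv_pow h2.le
      (by omega : 1 < d) hg hwc hg₀ hw
    rw [hlog] at key
    rw [hzpow, div_le_div_iff₀ (pow_pos hL d) (pow_pos hI d)]
    calc L * (∫ t in R₁..R₂, g t) ^ d
        ≤ L * ((∫ t in R₁..R₂, g t ^ d * (t * log t) ^ (d - 1)) * L ^ (d - 1)) := by gcongr
      _ = _ := by rw [mul_left_comm, ← pow_succ', Nat.sub_add_cancel (by omega)]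
  · have hsimp : EqOn (fun t => (1 / (t * log t)) ^ d * (t * log t) ^ (d - 1))
        (fun t => 1 / (t * log t)) (uIcc R₁ R₂) := fun t ht => by
      obtain ⟨k, rfl⟩ : ∃ k, d = k + 1 := ⟨d - 1, by omega⟩
      have := (hw t (by rwa [uIcc_of_le h2.le] at ht)).ne'
      dsimp only
      rw [Nat.add_sub_cancel, div_pow, one_pow, pow_succ]
      field_simp
    rw [intervalIntegral.integral_congr hsimp, hlog, hzpow]
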